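/- (Corollary 3.2.) Let 0 = x₀ < ⋯ < x_{n+1} = 1 be a grid, ε, b, c reals, f : [0,1] → ℝ continuous, A = (a(φⱼ, φᵢ))_{1≤i,j≤n} invertible, and Uⁿ ∈ ℝⁿ the solution of A·Uⁿ = F with Fⱼ = ∫₀¹ f·φⱼ. Fix 2 ≤ k ≤ n. Let S = {s₁ < ⋯ < s_m} ⊂ (x_{k−1}, x_k) and S' = {s'₁ < ⋯ < s'_{m'}} ⊂ (x_{k−1}, x_k) be two finite sets of added points, with corresponding refined Galerkin solutions having nodal values (u₁, …, uₙ) and (u'₁, …, u'ₙ) at x₁, …, xₙ. Fix i ∈ {2, …, n} with i ≠ k and assume (Uⁿ_{i−1} − u_{i−1})(Uⁿᵢ − uᵢ) < 0 and (Uⁿ_{i−1} − u'_{i−1})(Uⁿᵢ − u'ᵢ) < 0. Then the unique intersection point in (x_{i−1}, xᵢ) of the affine interpolants of Uⁿ and of (u_{i−1}, uᵢ) coincides with the unique intersection point of the affine interpolants of Uⁿ and of (u'_{i−1}, u'ᵢ); i.e. the intersection in (x_{i−1}, xᵢ) is independent of m and of the distribution of the added points in (x_{k−1}, x_k). -/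

import Mathlib

open Matrix MeasureTheory

/-- The hat (tent) function with support `[l, r]`, peak value 1 at `m`,
equal to `(t - l)/(m - l)` on `[l, m]` and `(r - t)/(r - m)` on `[m, r]`. -/
noncomputable def hat3 (l m r t : ℝ) : ℝ :=
  if l ≤ t ∧ t ≤ m then (t - l) / (m - l)
  else if m ≤ t ∧ t ≤ r then (r - t) / (r - m)
  else 0

/-- The piecewise derivative of `hat3 l m r`. -/
noncomputable def hat3D (l m r t : ℝ) : ℝ :=
  if l < t ∧ t < m then 1 / (m - l)
  else if m < t ∧ t < r then -(1 / (r - m))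
  else 0

/-- The hat function at node `i` of the grid `y`. -/
noncomputable def hatFn (y : ℕ → ℝ) (i : ℕ) : ℝ → ℝ :=
  hat3 (y (i - 1)) (y i) (y (i + 1))

/-- The piecewise derivative of the hat function at node `i` of the grid `y`. -/
noncomputable def hatDeriv (y : ℕ → ℝ) (i : ℕ) : ℝ → ℝ :=
  hat3D (y (i - 1)) (y i) (y (i + 1))

/-- The bilinear form `a(u, v) = ε∫₀¹ u'v' + b∫₀¹ u v' + c∫₀¹ u v`, where the (piecewise)
derivatives `u'`, `v'` are supplied explicitly as `uD`, `vD`. -/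
noncomputable def bform (ε b c : ℝ) (u uD v vD : ℝ → ℝ) : ℝ :=
  ε * (∫ t in (0:ℝ)..1, uD t * vD t)
    + b * (∫ t in (0:ℝ)..1, u t * vD t)
    + c * (∫ t in (0:ℝ)..1, u t * v t)

/-- `y` is a grid `0 = y₀ < y₁ < ⋯ < y_{N+1} = 1` with `N` interior nodes. -/
def IsGrid (y : ℕ → ℝ) (N : ℕ) : Prop :=
  y 0 = 0 ∧ y (N + 1) = 1 ∧ ∀ i ≤ N, y i < y (i + 1)

/-- The load `∫₀¹ f·φⱼ` for the grid `y`. -/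
noncomputable def load (f : ℝ → ℝ) (y : ℕ → ℝ) (j : ℕ) : ℝ :=
  ∫ t in (0:ℝ)..1, f t * hatFn y j t

/-- `w` (as coefficients at the interior nodes `y 1, …, y N`) is a Galerkin finite element
solution on the grid `y`: its `a`-pairing with every nodal basis hat function equals the
corresponding load. -/
def IsGalerkinSol (ε b c : ℝ) (f : ℝ → ℝ) (y : ℕ → ℝ) (N : ℕ) (w : ℕ → ℝ) : Prop :=
  ∀ j, 1 ≤ j → j ≤ N →
    (∑ i ∈ Finset.Icc 1 N,
        w i * bform ε b c (hatFn y i) (hatDeriv y i) (hatFn y j) (hatDeriv y j))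
      = load f y j

/-- The stiffness matrix `A` with `A i j = a(φ_{j+1}, φ_{i+1})` (`0`-based `Fin` indices
corresponding to the interior nodes `y 1, …, y n`). -/
noncomputable def stiff (ε b c : ℝ) (y : ℕ → ℝ) (n : ℕ) : Matrix (Fin n) (Fin n) ℝ :=
  fun i j => bform ε b c (hatFn y ((j : ℕ) + 1)) (hatDeriv y ((j : ℕ) + 1))
      (hatFn y ((i : ℕ) + 1)) (hatDeriv y ((i : ℕ) + 1))

/-- The affine function on `[α, β]` through `(α, ya)` and `(β, yb)`. -/
noncomputable def affInterp (α β ya yb t : ℝ) : ℝ :=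
  ya + (yb - ya) * (t - α) / (β - α)

/-! Away from the refined cell `(x_{k-1}, x_k)` the refined grid is the coarse grid (shifted by
`m` to the right of the cell), and a hat function only interacts with its two neighbours, so the
restriction `u` of the refined solution satisfies every coarse Galerkin equation except those of
rows `k - 1` and `k`. Hence `Uⁿ - u` is annihilated by the rows `1, …, k - 2` of the stiffness
matrix, which only involve the unknowns `1, …, k - 1` (similarly on the right of the cell). As
the stiffness matrix is invertible these `k - 2` rows are independent, so the vectors on those
`k - 1` unknowns that they annihilate form a line: `Uⁿ - u` and `Uⁿ - u'` are proportional there.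
The crossing point in `(x_{i-1}, x_i)` only depends on the ratio of the two nodal differences,
hence is the same for both refinements. -/

open Finset

theorem hat3_eq_zero_of_notMem_Ioo {l m r t : ℝ} (hlm : l < m) (hmr : m < r)
    (ht : t ∉ Set.Ioo l r) : hat3 l m r t = 0 := by
  rw [Set.mem_Ioo, not_and_or, not_lt, not_lt] at ht
  unfold hat3
  rcases ht with ht | ht
  · split_ifs with h₁ h₂
    · rw [le_antisymm ht h₁.1, sub_self, zero_div]
    · linarith [h₂.1]
    · rfl
  · split_ifs with h₁ h₂
    · linarith [h₁.2]
    · rw [le_antisymm h₂.2 ht, sub_self, zero_div]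
    · rfl

theorem hat3D_eq_zero_of_notMem_Ioo {l m r t : ℝ} (hlm : l < m) (hmr : m < r)
    (ht : t ∉ Set.Ioo l r) : hat3D l m r t = 0 := by
  rw [Set.mem_Ioo, not_and_or, not_lt, not_lt] at ht
  unfold hat3D
  split_ifs with h₁ h₂
  · rcases ht with ht | ht <;> linarith [h₁.1, h₁.2]
  · rcases ht with ht | ht <;> linarith [h₂.1, h₂.2]
  · rfl

theorem hat3_eq_of_le {l m r r' t : ℝ} (hlm : l ≤ m) (ht : t ≤ m) :
    hat3 l m r t = hat3 l m r' t := by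
  unfold hat3
  by_cases h : l ≤ t
  · rw [if_pos ⟨h, ht⟩, if_pos ⟨h, ht⟩]
  · have hm : ¬ m ≤ t := fun hm => h (hlm.trans hm)
    simp only [h, hm, false_and, if_false]

theorem hat3D_eq_of_le {l m r r' t : ℝ} (ht : t ≤ m) : hat3D l m r t = hat3D l m r' t := by
  have hm : ¬ m < t := not_lt.2 ht
  simp only [hat3D, hm, false_and, if_false]

theorem hat3_eq_of_ge {l l' m r t : ℝ} (hl : l < m) (hl' : l' < m) (ht : m ≤ t) :
    hat3 l m r t = hat3 l' m r t := by
  unfold hat3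
  rcases ht.eq_or_lt with rfl | ht
  · rw [if_pos ⟨hl.le, le_rfl⟩, if_pos ⟨hl'.le, le_rfl⟩, div_self (sub_ne_zero.2 hl.ne'),
      div_self (sub_ne_zero.2 hl'.ne')]
  · have hm : ¬ t ≤ m := not_le.2 ht
    simp only [hm, and_false, if_false]

theorem hat3D_eq_of_ge {l l' m r t : ℝ} (ht : m ≤ t) : hat3D l m r t = hat3D l' m r t := by
  have hm : ¬ t < m := not_lt.2 ht
  simp only [hat3D, hm, and_false, if_false]

section BilinearForm

variable {ε b c : ℝ} {u uD u' uD' v vD : ℝ → ℝ}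

theorem bform_congr_left (h : ∀ t, (u t = u' t ∧ uD t = uD' t) ∨ (v t = 0 ∧ vD t = 0)) :
    bform ε b c u uD v vD = bform ε b c u' uD' v vD := by
  have h₁ : (fun t => uD t * vD t) = fun t => uD' t * vD t := funext fun t => by
    rcases h t with ⟨-, h⟩ | ⟨-, h⟩ <;> simp [h]
  have h₂ : (fun t => u t * vD t) = fun t => u' t * vD t := funext fun t => by
    rcases h t with ⟨h, -⟩ | ⟨-, h⟩ <;> simp [h]
  have h₃ : (fun t => u t * v t) = fun t => u' t * v t := funext fun t => by
    rcases h t with ⟨h, -⟩ | ⟨h, -⟩ <;> simp [h]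
  simp only [bform, h₁, h₂, h₃]

theorem bform_eq_zero_of_disjoint (h : ∀ t, (u t = 0 ∧ uD t = 0) ∨ (v t = 0 ∧ vD t = 0)) :
    bform ε b c u uD v vD = 0 := by
  rw [bform_congr_left (u' := 0) (uD' := 0) h]
  simp [bform]

end BilinearForm

section Grid

variable {y : ℕ → ℝ} {N : ℕ}

theorem grid_le (hy : ∀ l ≤ N, y l < y (l + 1)) {a b : ℕ} (hab : a ≤ b) (hb : b ≤ N + 1) :
    y a ≤ y b :=
  (strictMonoOn_Iic_of_lt_succ (n := N + 1) fun l hl => by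
    simpa using hy l (by omega)).monotoneOn (by simp; omega) (by simp; omega) hab

theorem hatFn_eq_zero_of_notMem_Ioo {i : ℕ} (hl : y (i - 1) < y i) (hr : y i < y (i + 1)) {t : ℝ}
    (ht : t ∉ Set.Ioo (y (i - 1)) (y (i + 1))) : hatFn y i t = 0 ∧ hatDeriv y i t = 0 :=
  ⟨hat3_eq_zero_of_notMem_Ioo hl hr ht, hat3D_eq_zero_of_notMem_Ioo hl hr ht⟩

theorem grid_lt_of_mem_Icc (hy : ∀ l ≤ N, y l < y (l + 1)) {i : ℕ} (hi : i ∈ Icc 1 N) :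
    y (i - 1) < y i ∧ y i < y (i + 1) := by
  rw [mem_Icc] at hi
  exact ⟨by simpa [Nat.sub_add_cancel hi.1] using hy (i - 1) (by omega), hy i hi.2⟩

theorem bform_hatFn_eq_zero (ε b c : ℝ) (hy : ∀ l ≤ N, y l < y (l + 1)) {i j : ℕ}
    (hi : i ∈ Icc 1 N) (hj : j ∈ Icc 1 N) (hij : i + 2 ≤ j ∨ j + 2 ≤ i) :
    bform ε b c (hatFn y i) (hatDeriv y i) (hatFn y j) (hatDeriv y j) = 0 := by
  obtain ⟨hi₁, hi₂⟩ := grid_lt_of_mem_Icc hy hi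
  obtain ⟨hj₁, hj₂⟩ := grid_lt_of_mem_Icc hy hj
  rw [mem_Icc] at hi hj
  refine bform_eq_zero_of_disjoint fun t => ?_
  by_cases ht : t ∈ Set.Ioo (y (i - 1)) (y (i + 1))
  · refine Or.inr (hatFn_eq_zero_of_notMem_Ioo hj₁ hj₂ fun ht' => ?_)
    rcases hij with hij | hij
    · linarith [ht.2, ht'.1, grid_le hy (show i + 1 ≤ j - 1 by omega) (by omega)]
    · linarith [ht.1, ht'.2, grid_le hy (show j + 1 ≤ i - 1 by omega) (by omega)]
  · exact Or.inl (hatFn_eq_zero_of_notMem_Ioo hi₁ hi₂ ht)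

/-- The band may contain the indices `0` and `N + 1`, which the `if` switches off. -/
theorem sum_hatFn_row_eq_sum_band (ε b c : ℝ) (hy : ∀ l ≤ N, y l < y (l + 1)) (w : ℕ → ℝ)
    {j : ℕ} (hj : j ∈ Icc 1 N) :
    ∑ i ∈ Icc 1 N, w i * bform ε b c (hatFn y i) (hatDeriv y i) (hatFn y j) (hatDeriv y j)
      = ∑ i ∈ Icc (j - 1) (j + 1), if i ∈ Icc 1 N then
          w i * bform ε b c (hatFn y i) (hatDeriv y i) (hatFn y j) (hatDeriv y j) else 0 := by
  rw [sum_ite_mem, inter_comm]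
  refine (sum_subset inter_subset_left fun i hi hi' => ?_).symm
  have hband : i + 2 ≤ j ∨ j + 2 ≤ i := by
    simp only [mem_inter, mem_Icc, not_and_or, not_le] at hi hi' hj
    omega
  rw [bform_hatFn_eq_zero ε b c hy hi hj hband, mul_zero]

end Grid

section Refinement

variable {x y : ℕ → ℝ} {n N p q d : ℕ}

theorem hatFn_add_eq (hagree : ∀ l, p ≤ l → l ≤ q → y (l + d) = x l) {j : ℕ} (hpj : p + 1 ≤ j)
    (hjq : j + 1 ≤ q) : hatFn y (j + d) = hatFn x j ∧ hatDeriv y (j + d) = hatDeriv x j := by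
  have h₁ : y (j + d - 1) = x (j - 1) := by
    rw [show j + d - 1 = j - 1 + d by omega]; exact hagree _ (by omega) (by omega)
  have h₂ : y (j + d + 1) = x (j + 1) := by
    rw [show j + d + 1 = j + 1 + d by omega]; exact hagree _ (by omega) (by omega)
  simp only [hatFn, hatDeriv, h₁, h₂, hagree j (by omega) (by omega), and_self]

/-- At the edge `i = p` or `i = q` of the window only one half of `φ_i` is shared by the two
grids, but it is the half that meets the support of `φ_j`. -/
theorem bform_hatFn_add_eq (ε b c : ℝ) (hx : ∀ l ≤ n, x l < x (l + 1))
    (hy : ∀ l ≤ N, y l < y (l + 1)) (hagree : ∀ l, p ≤ l → l ≤ q → y (l + d) = x l)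
    (hqn : q ≤ n + 1) {i j : ℕ} (hi : 1 ≤ i) (hiN : i + d ≤ N) (hpj : p + 1 ≤ j)
    (hjq : j + 1 ≤ q) (hji : j ≤ i + 1) (hij : i ≤ j + 1) :
    bform ε b c (hatFn y (i + d)) (hatDeriv y (i + d)) (hatFn y (j + d)) (hatDeriv y (j + d))
      = bform ε b c (hatFn x i) (hatDeriv x i) (hatFn x j) (hatDeriv x j) := by
  obtain ⟨hφj, hφj'⟩ := hatFn_add_eq hagree hpj hjq
  rw [hφj, hφj']
  obtain ⟨hxj₁, hxj₂⟩ := grid_lt_of_mem_Icc hx (mem_Icc.2 ⟨by omega, by omega⟩ : j ∈ Icc 1 n)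
  have htest (t : ℝ) := hatFn_eq_zero_of_notMem_Ioo hxj₁ hxj₂ (t := t)
  refine bform_congr_left fun t => ?_
  by_cases hip : p + 1 ≤ i
  · by_cases hiq : i + 1 ≤ q
    · obtain ⟨hφi, hφi'⟩ := hatFn_add_eq hagree hip hiq
      exact Or.inl ⟨congrFun hφi t, congrFun hφi' t⟩
    · have hi' : i = j + 1 := by omega
      have hl : y (i + d - 1) = x (i - 1) := by
        rw [show i + d - 1 = i - 1 + d by omega]; exact hagree _ (by omega) (by omega)
      have hm : y (i + d) = x i := hagree _ (by omega) (by omega)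
      by_cases ht : t ≤ x i
      · left
        simp only [hatFn, hatDeriv, hl, hm]
        exact ⟨hat3_eq_of_le (grid_le hx (Nat.sub_le i 1) (by omega)) ht, hat3D_eq_of_le ht⟩
      · exact Or.inr (htest t fun h => ht (hi' ▸ h.2.le))
  · have hi' : i = p := by omega
    have hm : y (i + d) = x i := hagree _ (by omega) (by omega)
    have hr : y (i + d + 1) = x (i + 1) := by
      rw [show i + d + 1 = i + 1 + d by omega]; exact hagree _ (by omega) (by omega)
    by_cases ht : x i ≤ t
    · left
      have hyl : y (i + d - 1) < x i := by
        simpa [Nat.sub_add_cancel (show 1 ≤ i + d by omega), hm] using hy (i + d - 1) (by omega)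
      have hxl : x (i - 1) < x i := (grid_lt_of_mem_Icc hx (mem_Icc.2 ⟨hi, by omega⟩)).1
      simp only [hatFn, hatDeriv, hm, hr]
      exact ⟨hat3_eq_of_ge hyl hxl ht, hat3D_eq_of_ge ht⟩
    · exact Or.inr (htest t fun h => ht (by rw [show i = j - 1 by omega]; exact h.1.le))

theorem IsGalerkinSol.sum_restrict_eq_load {ε b c : ℝ} {f : ℝ → ℝ} {w uv : ℕ → ℝ}
    (hw : IsGalerkinSol ε b c f y N w) (hx : ∀ l ≤ n, x l < x (l + 1))
    (hy : ∀ l ≤ N, y l < y (l + 1)) (hagree : ∀ l, p ≤ l → l ≤ q → y (l + d) = x l)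
    (hqn : q ≤ n + 1) (huv : ∀ l, p ≤ l → l ≤ q → uv l = w (l + d))
    (hbound : ∀ l, p ≤ l → l ≤ q → (l ∈ Icc 1 n ↔ l + d ∈ Icc 1 N))
    {j : ℕ} (hj : 1 ≤ j) (hpj : p + 1 ≤ j) (hjq : j + 1 ≤ q) :
    ∑ i ∈ Icc 1 n, uv i * bform ε b c (hatFn x i) (hatDeriv x i) (hatFn x j) (hatDeriv x j)
      = load f x j := by
  have hjn : j ∈ Icc 1 n := mem_Icc.2 ⟨hj, by omega⟩
  have hjN : j + d ∈ Icc 1 N := (hbound j (by omega) (by omega)).1 hjn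
  calc ∑ i ∈ Icc 1 n, uv i * bform ε b c (hatFn x i) (hatDeriv x i) (hatFn x j) (hatDeriv x j)
      = ∑ i ∈ Icc (j - 1) (j + 1), if i + d ∈ Icc 1 N then w (i + d) *
          bform ε b c (hatFn y (i + d)) (hatDeriv y (i + d)) (hatFn y (j + d))
            (hatDeriv y (j + d)) else 0 := by
        rw [sum_hatFn_row_eq_sum_band ε b c hx uv hjn]
        refine sum_congr rfl fun i hi => ?_
        rw [mem_Icc] at hi
        have hiN := hbound i (by omega) (by omega)
        by_cases hin : i ∈ Icc 1 n
        · rw [if_pos hin, if_pos (hiN.1 hin), huv i (by omega) (by omega),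
            bform_hatFn_add_eq ε b c hx hy hagree hqn (mem_Icc.1 hin).1
              (mem_Icc.1 (hiN.1 hin)).2 hpj hjq (by omega) (by omega)]
        · rw [if_neg hin, if_neg (mt hiN.2 hin)]
    _ = ∑ i ∈ Icc (j + d - 1) (j + d + 1), if i ∈ Icc 1 N then w i *
          bform ε b c (hatFn y i) (hatDeriv y i) (hatFn y (j + d)) (hatDeriv y (j + d))
            else 0 := by
        rw [show j + d - 1 = j - 1 + d by omega, show j + d + 1 = j + 1 + d by omega,
          ← map_add_right_Icc, sum_map]
        rfl
    _ = load f y (j + d) := by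
        rw [← sum_hatFn_row_eq_sum_band ε b c hy w hjN, hw _ (mem_Icc.1 hjN).1 (mem_Icc.1 hjN).2]
    _ = load f x j := by rw [load, load, (hatFn_add_eq hagree hpj hjq).1]

end Refinement

section KernelOfRows

variable {K ι : Type*} [Field K] [Fintype ι] {M : Matrix ι ι K} {s T : Finset ι}

theorem linearIndependent_rows_submatrix_of_det_ne_zero [DecidableEq ι] (hM : M.det ≠ 0)
    (hsupp : ∀ r ∈ s, ∀ c ∉ T, M r c = 0) :
    LinearIndependent K (M.submatrix ((↑) : s → ι) ((↑) : T → ι)).row := by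
  have hrows := (linearIndependent_rows_of_det_ne_zero hM).comp _
    (Subtype.val_injective (p := (· ∈ s)))
  rw [Fintype.linearIndependent_iff] at hrows ⊢
  intro g hg
  refine hrows g (funext fun c => ?_)
  by_cases hc : c ∈ T
  · simpa using congrFun hg ⟨c, hc⟩
  · simp [Finset.sum_apply, hsupp _ (Subtype.prop _) c hc]

theorem finrank_ker_submatrix_le_one [DecidableEq ι] (hM : M.det ≠ 0)
    (hsupp : ∀ r ∈ s, ∀ c ∉ T, M r c = 0) (hcard : T.card = s.card + 1) :
    Module.finrank K (LinearMap.ker (M.submatrix ((↑) : s → ι) ((↑) : T → ι)).mulVecLin) ≤ 1 := by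
  have hrank := (linearIndependent_rows_submatrix_of_det_ne_zero hM hsupp).rank_matrix
  have hnullity := LinearMap.finrank_range_add_finrank_ker
    (M.submatrix ((↑) : s → ι) ((↑) : T → ι)).mulVecLin
  rw [← Matrix.rank, hrank] at hnullity
  simp only [Module.finrank_fintype_fun_eq_card, Fintype.card_coe, hcard] at hnullity ⊢
  omega

theorem submatrix_mulVec_restrict (hsupp : ∀ r ∈ s, ∀ c ∉ T, M r c = 0) (v : ι → K) (r : s) :
    (M.submatrix ((↑) : s → ι) ((↑) : T → ι) *ᵥ fun c => v c) r = (M *ᵥ v) r := by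
  simp only [mulVec, dotProduct, submatrix_apply]
  rw [sum_coe_sort T (fun c => M r c * v c)]
  exact sum_subset (subset_univ T) fun c _ hc => by simp [hsupp _ r.2 c hc]

theorem mul_eq_mul_of_mulVec_eq_zero [DecidableEq ι] (hM : M.det ≠ 0)
    (hsupp : ∀ r ∈ s, ∀ c ∉ T, M r c = 0) (hcard : T.card = s.card + 1) {v v' : ι → K}
    (hv : ∀ r ∈ s, (M *ᵥ v) r = 0) (hv' : ∀ r ∈ s, (M *ᵥ v') r = 0) {a b : ι} (ha : a ∈ T)
    (hb : b ∈ T) :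
    v a * v' b = v b * v' a := by
  set B := M.submatrix ((↑) : s → ι) ((↑) : T → ι)
  have hker (u : ι → K) (hu : ∀ r ∈ s, (M *ᵥ u) r = 0) :
      (fun c : T => u c) ∈ LinearMap.ker B.mulVecLin := by
    rw [LinearMap.mem_ker, mulVecLin_apply]
    funext r
    rw [submatrix_mulVec_restrict hsupp, hu r r.2, Pi.zero_apply]
  obtain ⟨e, he⟩ := finrank_le_one_iff.1 (finrank_ker_submatrix_le_one hM hsupp hcard)
  obtain ⟨α, hα⟩ := he ⟨_, hker v hv⟩
  obtain ⟨β, hβ⟩ := he ⟨_, hker v' hv'⟩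
  have hva := congrFun (congrArg Subtype.val hα) ⟨a, ha⟩
  have hvb := congrFun (congrArg Subtype.val hα) ⟨b, hb⟩
  have hva' := congrFun (congrArg Subtype.val hβ) ⟨a, ha⟩
  have hvb' := congrFun (congrArg Subtype.val hβ) ⟨b, hb⟩
  simp only [Submodule.coe_smul, Pi.smul_apply, smul_eq_mul] at hva hvb hva' hvb'
  rw [← hva, ← hvb, ← hva', ← hvb']
  ring

end KernelOfRows

section Stiffness

variable {ε b c : ℝ} {x : ℕ → ℝ} {n : ℕ}

theorem stiff_mulVec_apply (v : ℕ → ℝ) (r : Fin n) :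
    (stiff ε b c x n *ᵥ fun j : Fin n => v (j + 1)) r
      = ∑ i ∈ Icc 1 n, v i * bform ε b c (hatFn x i) (hatDeriv x i) (hatFn x (r + 1))
          (hatDeriv x (r + 1)) := by
  simp only [mulVec, dotProduct, stiff, mul_comm (bform _ _ _ _ _ _ _)]
  rw [← Ico_add_one_right_eq_Icc, sum_Ico_eq_sum_range, Nat.add_sub_cancel]
  simp only [add_comm 1]
  exact Fin.sum_univ_eq_sum_range (fun i => v (i + 1) * bform ε b c (hatFn x (i + 1))
    (hatDeriv x (i + 1)) (hatFn x (r + 1)) (hatDeriv x (r + 1))) n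

theorem stiff_mulVec_sub_restrict_eq_zero {f : ℝ → ℝ} {y : ℕ → ℝ} {m k : ℕ} (hk : 1 ≤ k)
    (hkn : k ≤ n) (hx : ∀ l ≤ n, x l < x (l + 1)) (hy : ∀ l ≤ n + m, y l < y (l + 1))
    (hagreeL : ∀ i ≤ k - 1, y i = x i) (hagreeR : ∀ i, k ≤ i → i ≤ n + 1 → y (i + m) = x i)
    {Un w uv : ℕ → ℝ}
    (hUn : stiff ε b c x n *ᵥ (fun j : Fin n => Un (j + 1)) = fun j : Fin n => load f x (j + 1))
    (hw : IsGalerkinSol ε b c f y (n + m) w)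
    (huv : ∀ j, uv j = if j ≤ k - 1 then w j else w (j + m))
    (r : Fin n) (hr : (r : ℕ) + 3 ≤ k ∨ k ≤ r) :
    (stiff ε b c x n *ᵥ fun j : Fin n => (Un - uv) ((j : ℕ) + 1)) r = 0 := by
  have hrow : (stiff ε b c x n *ᵥ fun j : Fin n => uv (j + 1)) r = load f x (r + 1) := by
    rw [stiff_mulVec_apply]
    rcases hr with hr | hr
    · exact hw.sum_restrict_eq_load (p := 0) (q := k - 1) (d := 0) hx hy
        (fun l _ hl => hagreeL l hl) (by omega) (fun l _ hl => by simp [huv, hl])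
        (fun l _ _ => by simp only [mem_Icc, add_zero]; omega) (by omega) (by omega) (by omega)
    · exact hw.sum_restrict_eq_load (p := k) (q := n + 1) (d := m) hx hy
        hagreeR le_rfl (fun l hl _ => by rw [huv, if_neg (by omega)])
        (fun l _ _ => by simp only [mem_Icc]; omega) (by omega) (by omega) (by omega)
  change (stiff ε b c x n *ᵥ ((fun j : Fin n => Un (j + 1)) - fun j : Fin n => uv (j + 1))) r = 0
  rw [mulVec_sub, Pi.sub_apply, hUn, hrow, sub_self]

theorem mul_eq_mul_of_stiff_mulVec_eq_zero {k : ℕ} (hk : 1 ≤ k) (hkn : k ≤ n)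
    (hx : ∀ l ≤ n, x l < x (l + 1)) (hdet : (stiff ε b c x n).det ≠ 0) {D D' : ℕ → ℝ}
    (hD : ∀ r : Fin n, (r : ℕ) + 3 ≤ k ∨ k ≤ r →
      (stiff ε b c x n *ᵥ fun j : Fin n => D (j + 1)) r = 0)
    (hD' : ∀ r : Fin n, (r : ℕ) + 3 ≤ k ∨ k ≤ r →
      (stiff ε b c x n *ᵥ fun j : Fin n => D' (j + 1)) r = 0)
    {i : ℕ} (hi2 : 2 ≤ i) (hin : i ≤ n) (hik : i ≠ k) :
    D (i - 1) * D' i = D i * D' (i - 1) := by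
  have hband (r j : Fin n) (h : (r : ℕ) + 2 ≤ j ∨ (j : ℕ) + 2 ≤ r) : stiff ε b c x n r j = 0 :=
    bform_hatFn_eq_zero ε b c hx (by simp) (by simp) (by omega)
  obtain ⟨s, j₀, hj₀, hs, hsupp, hi₁, hi₂⟩ : ∃ (s : Finset (Fin n)) (j₀ : Fin n), j₀ ∉ s ∧
      (∀ r ∈ s, (r : ℕ) + 3 ≤ k ∨ k ≤ r) ∧
      (∀ r ∈ s, ∀ j ∉ insert j₀ s, (r : ℕ) + 2 ≤ j ∨ (j : ℕ) + 2 ≤ r) ∧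
      (⟨i - 2, by omega⟩ : Fin n) ∈ insert j₀ s ∧ (⟨i - 1, by omega⟩ : Fin n) ∈ insert j₀ s := by
    rcases lt_or_gt_of_ne hik with hik | hik
    · refine ⟨univ.filter fun r : Fin n => (r : ℕ) + 3 ≤ k, ⟨k - 2, by omega⟩,
        ?_, ?_, ?_, ?_, ?_⟩ <;> simp [Fin.ext_iff] <;> omega
    · refine ⟨univ.filter fun r : Fin n => k ≤ (r : ℕ), ⟨k - 1, by omega⟩, ?_, ?_, ?_, ?_, ?_⟩ <;>
        simp [Fin.ext_iff] <;> omega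
  have := mul_eq_mul_of_mulVec_eq_zero hdet (fun r hr j hj => hband r j (hsupp r hr j hj))
    (card_insert_of_notMem hj₀) (fun r hr => hD r (hs r hr)) (fun r hr => hD' r (hs r hr)) hi₁ hi₂
  simpa [show i - 2 + 1 = i - 1 by omega, show i - 1 + 1 = i by omega] using this

end Stiffness

section Crossing

/-- The zero of the affine function taking the values `d₁` at `α` and `d₂` at `β`. -/
noncomputable def affCrossing (α β d₁ d₂ : ℝ) : ℝ := α + d₁ / (d₁ - d₂) * (β - α)

variable {α β d₁ d₂ : ℝ}

theorem sub_ne_zero_of_mul_neg (h : d₁ * d₂ < 0) : d₁ - d₂ ≠ 0 := by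
  intro h'
  rw [sub_eq_zero.1 h'] at h
  nlinarith

theorem affCrossing_mem_Ioo (hαβ : α < β) (h : d₁ * d₂ < 0) :
    affCrossing α β d₁ d₂ ∈ Set.Ioo α β := by
  have hτ : 0 < d₁ / (d₁ - d₂) ∧ d₁ / (d₁ - d₂) < 1 := by
    rcases lt_or_gt_of_ne (show d₁ ≠ 0 by rintro rfl; simp at h) with hd₁ | hd₁
    · have hd₂ : 0 < d₂ := by nlinarith
      exact ⟨div_pos_of_neg_of_neg hd₁ (by linarith), (div_lt_one_of_neg (by linarith)).2
        (by linarith)⟩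
    · have hd₂ : d₂ < 0 := by nlinarith
      exact ⟨div_pos hd₁ (by linarith), (div_lt_one (by linarith)).2 (by linarith)⟩
  have hβα := sub_pos.2 hαβ
  simp only [affCrossing, Set.mem_Ioo]
  constructor <;> nlinarith [mul_pos hτ.1 hβα, mul_pos (sub_pos.2 hτ.2) hβα]

theorem affInterp_eq_affInterp_iff {u₁ u₂ p₁ p₂ t : ℝ} (hαβ : α < β)
    (h : (u₁ - p₁) * (u₂ - p₂) < 0) :
    affInterp α β u₁ u₂ t = affInterp α β p₁ p₂ t ↔ t = affCrossing α β (u₁ - p₁) (u₂ - p₂) := by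
  have hd := sub_ne_zero_of_mul_neg h
  have hβα : β - α ≠ 0 := (sub_pos.2 hαβ).ne'
  unfold affInterp affCrossing
  constructor
  · intro h'
    field_simp at h' ⊢
    linear_combination -h'
  · rintro rfl
    field_simp
    ring

theorem affCrossing_eq_of_mul_eq {e₁ e₂ : ℝ} (hd : d₁ * d₂ < 0) (he : e₁ * e₂ < 0)
    (h : d₁ * e₂ = d₂ * e₁) : affCrossing α β d₁ d₂ = affCrossing α β e₁ e₂ := by
  unfold affCrossing
  congr 2
  rw [div_eq_div_iff (sub_ne_zero_of_mul_neg hd) (sub_ne_zero_of_mul_neg he)]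
  linear_combination -h

theorem exists_common_crossing {u₁ u₂ p₁ p₂ q₁ q₂ : ℝ} (hαβ : α < β)
    (hp : (u₁ - p₁) * (u₂ - p₂) < 0) (hq : (u₁ - q₁) * (u₂ - q₂) < 0)
    (hpq : (u₁ - p₁) * (u₂ - q₂) = (u₂ - p₂) * (u₁ - q₁)) :
    ∃ t ∈ Set.Ioo α β,
      affInterp α β u₁ u₂ t = affInterp α β p₁ p₂ t ∧
      affInterp α β u₁ u₂ t = affInterp α β q₁ q₂ t ∧
      ∀ t' ∈ Set.Ioo α β,
        (affInterp α β u₁ u₂ t' = affInterp α β p₁ p₂ t' ∨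
          affInterp α β u₁ u₂ t' = affInterp α β q₁ q₂ t') → t' = t := by
  have hcross := affCrossing_eq_of_mul_eq (α := α) (β := β) hp hq hpq
  refine ⟨_, affCrossing_mem_Ioo hαβ hp, (affInterp_eq_affInterp_iff hαβ hp).2 rfl,
    (affInterp_eq_affInterp_iff hαβ hq).2 hcross, ?_⟩
  rintro t' - (h | h)
  · exact (affInterp_eq_affInterp_iff hαβ hp).1 h
  · exact ((affInterp_eq_affInterp_iff hαβ hq).1 h).trans hcross.symm

end Crossing

theorem statement10_general (n m m' k : ℕ)
    (hk2 : 2 ≤ k) (hkn : k ≤ n)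
    (x y y' : ℕ → ℝ) (ε b c : ℝ) (f : ℝ → ℝ)
    (hx : IsGrid x n) (hy : IsGrid y (n + m)) (hy' : IsGrid y' (n + m'))
    (hagreeL : ∀ i ≤ k - 1, y i = x i)
    (hagreeR : ∀ i, k ≤ i → i ≤ n + 1 → y (i + m) = x i)
    (hagreeL' : ∀ i ≤ k - 1, y' i = x i)
    (hagreeR' : ∀ i, k ≤ i → i ≤ n + 1 → y' (i + m') = x i)
    (A : Matrix (Fin n) (Fin n) ℝ) (hA : A = stiff ε b c x n) (hAdet : A.det ≠ 0)
    (Un : ℕ → ℝ)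
    (hUn : A *ᵥ (fun j : Fin n => Un ((j : ℕ) + 1))
      = fun j : Fin n => load f x ((j : ℕ) + 1))
    (w w' : ℕ → ℝ)
    (hw : IsGalerkinSol ε b c f y (n + m) w)
    (hw' : IsGalerkinSol ε b c f y' (n + m') w')
    (uv uv' : ℕ → ℝ)
    (huv : ∀ j, uv j = if j ≤ k - 1 then w j else w (j + m))
    (huv' : ∀ j, uv' j = if j ≤ k - 1 then w' j else w' (j + m'))
    (i : ℕ) (hi2 : 2 ≤ i) (hin : i ≤ n) (hik : i ≠ k)
    (hsgn : (Un (i - 1) - uv (i - 1)) * (Un i - uv i) < 0)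
    (hsgn' : (Un (i - 1) - uv' (i - 1)) * (Un i - uv' i) < 0) :
    ∃ t ∈ Set.Ioo (x (i - 1)) (x i),
      affInterp (x (i - 1)) (x i) (Un (i - 1)) (Un i) t
        = affInterp (x (i - 1)) (x i) (uv (i - 1)) (uv i) t ∧
      affInterp (x (i - 1)) (x i) (Un (i - 1)) (Un i) t
        = affInterp (x (i - 1)) (x i) (uv' (i - 1)) (uv' i) t ∧
      ∀ t' ∈ Set.Ioo (x (i - 1)) (x i),
        (affInterp (x (i - 1)) (x i) (Un (i - 1)) (Un i) t'
            = affInterp (x (i - 1)) (x i) (uv (i - 1)) (uv i) t' ∨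
          affInterp (x (i - 1)) (x i) (Un (i - 1)) (Un i) t'
            = affInterp (x (i - 1)) (x i) (uv' (i - 1)) (uv' i) t') → t' = t := by
  obtain ⟨-, -, hx⟩ := hx
  subst hA
  have hk : 1 ≤ k := by omega
  have hD := stiff_mulVec_sub_restrict_eq_zero hk hkn hx hy.2.2 hagreeL hagreeR hUn hw huv
  have hD' := stiff_mulVec_sub_restrict_eq_zero hk hkn hx hy'.2.2 hagreeL' hagreeR' hUn hw' huv'
  have hpq := mul_eq_mul_of_stiff_mulVec_eq_zero hk hkn hx hAdet hD hD' hi2 hin hik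
  simp only [Pi.sub_apply] at hpq
  have hxi : x (i - 1) < x i := (grid_lt_of_mem_Icc hx (mem_Icc.2 ⟨by omega, hin⟩)).1
  exact exists_common_crossing hxi hsgn hsgn' hpq

/-- Corollary 3.2: let `2 ≤ k ≤ n`, and refine the grid `x` by inserting `m`
(resp. `m'`) points inside `(x_{k−1}, x_k)`, with refined Galerkin solutions `w` (resp. `w'`)
whose values at the old nodes `x₁, …, xₙ` are `uv` (resp. `uv'`). Then for each
`i ∈ {2, …, n}` with `i ≠ k` where the nodal differences with `Uⁿ` change sign for both
refinements, the unique intersection point in `(x_{i−1}, xᵢ)` of the affine interpolants of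
`Uⁿ` and of `uv` coincides with that of `Uⁿ` and `uv'`: the intersection is independent of
`m` and of the distribution of the added points in `(x_{k−1}, x_k)`. -/
theorem statement10 (n m m' k : ℕ) (hn : 1 ≤ n) (hm : 1 ≤ m) (hm' : 1 ≤ m')
    (hk2 : 2 ≤ k) (hkn : k ≤ n)
    (x y y' : ℕ → ℝ) (ε b c : ℝ) (f : ℝ → ℝ)
    (hf : ContinuousOn f (Set.Icc 0 1))
    (hx : IsGrid x n) (hy : IsGrid y (n + m)) (hy' : IsGrid y' (n + m'))
    (hagreeL : ∀ i ≤ k - 1, y i = x i)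
    (hagreeR : ∀ i, k ≤ i → i ≤ n + 1 → y (i + m) = x i)
    (hagreeL' : ∀ i ≤ k - 1, y' i = x i)
    (hagreeR' : ∀ i, k ≤ i → i ≤ n + 1 → y' (i + m') = x i)
    (A : Matrix (Fin n) (Fin n) ℝ) (hA : A = stiff ε b c x n) (hAdet : A.det ≠ 0)
    (Un : ℕ → ℝ)
    (hUn : A *ᵥ (fun j : Fin n => Un ((j : ℕ) + 1))
      = fun j : Fin n => load f x ((j : ℕ) + 1))
    (w w' : ℕ → ℝ)
    (hw : IsGalerkinSol ε b c f y (n + m) w)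
    (hw' : IsGalerkinSol ε b c f y' (n + m') w')
    (uv uv' : ℕ → ℝ)
    (huv : ∀ j, uv j = if j ≤ k - 1 then w j else w (j + m))
    (huv' : ∀ j, uv' j = if j ≤ k - 1 then w' j else w' (j + m'))
    (i : ℕ) (hi2 : 2 ≤ i) (hin : i ≤ n) (hik : i ≠ k)
    (hsgn : (Un (i - 1) - uv (i - 1)) * (Un i - uv i) < 0)
    (hsgn' : (Un (i - 1) - uv' (i - 1)) * (Un i - uv' i) < 0) :
    ∃ t ∈ Set.Ioo (x (i - 1)) (x i),
      affInterp (x (i - 1)) (x i) (Un (i - 1)) (Un i) t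
        = affInterp (x (i - 1)) (x i) (uv (i - 1)) (uv i) t ∧
      affInterp (x (i - 1)) (x i) (Un (i - 1)) (Un i) t
        = affInterp (x (i - 1)) (x i) (uv' (i - 1)) (uv' i) t ∧
      ∀ t' ∈ Set.Ioo (x (i - 1)) (x i),
        (affInterp (x (i - 1)) (x i) (Un (i - 1)) (Un i) t'
            = affInterp (x (i - 1)) (x i) (uv (i - 1)) (uv i) t' ∨
          affInterp (x (i - 1)) (x i) (Un (i - 1)) (Un i) t'
            = affInterp (x (i - 1)) (x i) (uv' (i - 1)) (uv' i) t') → t' = t :=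
  statement10_general n m m' k hk2 hkn x y y' ε b c f hx hy hy' hagreeL hagreeR hagreeL' hagreeR' A
    hA hAdet Un hUn w w' hw hw' uv uv' huv huv' i hi2 hin hik hsgn hsgn'
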